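/- arXiv:1710.04888 — 4 statements merged into one kernel-verified Lean document; each statement's English description precedes it below -/
import Mathlib

section
/- Let K ⊆ ℝ^d, let z_1,…,z_L ∈ ℝ^d, h > 0, and let φ_1,…,φ_L : ℝ^d → ℝ satisfy: φ_i(x) ≥ 0 for all x ∈ K and all i; ∑_{i=1}^L φ_i(x) = 1 for all x ∈ K; ∑_{i=1}^L φ_i(x) z_i = x for all x ∈ K; and φ_i(x) = 0 whenever ‖x − z_i‖ > h. Let α ∈ (0,1], H ≥ 0, and let u : ℝ^d → ℝ be differentiable everywhere with ‖∇u(a) − ∇u(b)‖ ≤ H ‖a − b‖^α for all a, b ∈ ℝ^d. Then for every x ∈ K, |u(x) − ∑_{i=1}^L u(z_i) φ_i(x)| ≤ H h^{1+α}. -/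
open scoped RealInnerProductSpace

/-- Taylor-type bound for a function with `α`-Hölder gradient. -/
lemma taylor_holder_bound {d : ℕ} (α : ℝ) (hα0 : 0 < α) (H : ℝ) (hH : 0 ≤ H)
    (u : EuclideanSpace ℝ (Fin d) → ℝ) (hu : Differentiable ℝ u)
    (hgrad : ∀ a b : EuclideanSpace ℝ (Fin d),
      ‖gradient u a - gradient u b‖ ≤ H * ‖a - b‖ ^ α)
    (a b : EuclideanSpace ℝ (Fin d)) :
    |u b - u a - ⟪gradient u a, b - a⟫| ≤ H * ‖b - a‖ ^ (1 + α) := by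
  have key : ‖u b - u a - (fderiv ℝ u a) (b - a)‖ ≤ (H * ‖b - a‖ ^ α) * ‖b - a‖ := by
    apply Convex.norm_image_sub_le_of_norm_fderiv_le'
      (fun y _ => hu y) _ (convex_segment a b) (left_mem_segment ℝ a b)
      (right_mem_segment ℝ a b)
    intro y hy
    have h1 : ‖fderiv ℝ u y - fderiv ℝ u a‖ = ‖gradient u y - gradient u a‖ := by
      have : fderiv ℝ u y - fderiv ℝ u a
          = InnerProductSpace.toDual ℝ _ (gradient u y - gradient u a) := by
        simp [gradient, map_sub]
      rw [this, LinearIsometryEquiv.norm_map]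
    rw [h1]
    refine (hgrad y a).trans ?_
    have hle : ‖y - a‖ ≤ ‖b - a‖ := by
      rcases hy with ⟨s, t, hs, ht, hst, rfl⟩
      have : s • a + t • b - a = t • (b - a) := by
        have hs1 : s = 1 - t := by linarith
        rw [hs1]; module
      rw [this, norm_smul]
      calc ‖t‖ * ‖b - a‖ ≤ 1 * ‖b - a‖ := by
            apply mul_le_mul_of_nonneg_right _ (norm_nonneg _)
            rw [Real.norm_eq_abs, abs_of_nonneg ht]; linarith
        _ = ‖b - a‖ := one_mul _
    exact mul_le_mul_of_nonneg_left
      (Real.rpow_le_rpow (norm_nonneg _) hle hα0.le) hH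
  have hfg : (fderiv ℝ u a) (b - a) = ⟪gradient u a, b - a⟫ := by
    have : fderiv ℝ u a = InnerProductSpace.toDual ℝ _ (gradient u a) := by
      simp [gradient]
    rw [this, InnerProductSpace.toDual_apply_apply]
  rw [← hfg]
  calc |u b - u a - (fderiv ℝ u a) (b - a)| ≤ (H * ‖b - a‖ ^ α) * ‖b - a‖ := key
    _ = H * ‖b - a‖ ^ (1 + α) := by
        rw [Real.rpow_add' (norm_nonneg _) (by positivity), Real.rpow_one]; ring

/-- Nodal interpolation error estimate for `C^{1,α}` functions:
if the nodal basis functions form a nonnegative partition of unity on `K`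
reproducing affine functions, each supported in a ball of radius `h` around
its node, then the interpolation error is bounded by `H * h^(1+α)`. -/
theorem nodal_interpolation_error
    {d L : ℕ} (K : Set (EuclideanSpace ℝ (Fin d)))
    (z : Fin L → EuclideanSpace ℝ (Fin d)) (h : ℝ) (hh : 0 < h)
    (φ : Fin L → EuclideanSpace ℝ (Fin d) → ℝ)
    (hnn : ∀ i, ∀ x ∈ K, 0 ≤ φ i x)
    (hpart : ∀ x ∈ K, ∑ i, φ i x = 1)
    (haff : ∀ x ∈ K, ∑ i, φ i x • z i = x)
    (hsupp : ∀ i, ∀ x : EuclideanSpace ℝ (Fin d), h < ‖x - z i‖ → φ i x = 0)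
    (α : ℝ) (hα0 : 0 < α) (hα1 : α ≤ 1) (H : ℝ) (hH : 0 ≤ H)
    (u : EuclideanSpace ℝ (Fin d) → ℝ) (hu : Differentiable ℝ u)
    (hgrad : ∀ a b : EuclideanSpace ℝ (Fin d),
      ‖gradient u a - gradient u b‖ ≤ H * ‖a - b‖ ^ α) :
    ∀ x ∈ K, |u x - ∑ i, u (z i) * φ i x| ≤ H * h ^ (1 + α) := by
  intro x hx
  set g := gradient u x with hg
  have key : u x - ∑ i, u (z i) * φ i x
      = ∑ i, φ i x * (u x - u (z i) + ⟪g, z i - x⟫) := by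
    have h1 : ∑ i, φ i x * u x = u x := by
      rw [← Finset.sum_mul, hpart x hx, one_mul]
    have h2 : ∑ i, φ i x * ⟪g, z i - x⟫ = 0 := by
      have : ∑ i, φ i x * ⟪g, z i - x⟫ = ⟪g, ∑ i, φ i x • (z i - x)⟫ := by
        rw [inner_sum]
        refine Finset.sum_congr rfl fun i _ => ?_
        rw [real_inner_smul_right]
      rw [this]
      have : ∑ i, φ i x • (z i - x) = 0 := by
        have := haff x hx
        have hp := hpart x hx
        calc ∑ i, φ i x • (z i - x) = (∑ i, φ i x • z i) - (∑ i, φ i x) • x := by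
              rw [Finset.sum_smul]; simp [smul_sub]
          _ = 0 := by rw [haff x hx, hp, one_smul, sub_self]
      rw [this, inner_zero_right]
    calc u x - ∑ i, u (z i) * φ i x
        = (∑ i, φ i x * u x) - (∑ i, φ i x * u (z i)) + ∑ i, φ i x * ⟪g, z i - x⟫ := by
          rw [h1, h2]; ring_nf
          congr 1
          exact Finset.sum_congr rfl fun i _ => by ring
      _ = ∑ i, φ i x * (u x - u (z i) + ⟪g, z i - x⟫) := by
          rw [← Finset.sum_sub_distrib, ← Finset.sum_add_distrib]
          exact Finset.sum_congr rfl fun i _ => by ring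
  rw [key]
  calc |∑ i, φ i x * (u x - u (z i) + ⟪g, z i - x⟫)|
      ≤ ∑ i, |φ i x * (u x - u (z i) + ⟪g, z i - x⟫)| := Finset.abs_sum_le_sum_abs _ _
    _ ≤ ∑ i, φ i x * (H * h ^ (1 + α)) := by
        apply Finset.sum_le_sum
        intro i _
        rw [abs_mul, abs_of_nonneg (hnn i x hx)]
        by_cases hc : h < ‖x - z i‖
        · rw [hsupp i x hc]; simp
        · push_neg at hc
          apply mul_le_mul_of_nonneg_left _ (hnn i x hx)
          have hb := taylor_holder_bound α hα0 H hH u hu hgrad x (z i)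
          have habs : |u x - u (z i) + ⟪g, z i - x⟫|
              = |u (z i) - u x - ⟪g, z i - x⟫| := by
            rw [← abs_neg]; congr 1; ring
          rw [habs]
          refine hb.trans ?_
          apply mul_le_mul_of_nonneg_left _ hH
          apply Real.rpow_le_rpow (norm_nonneg _) _ (by positivity)
          rwa [← norm_neg, neg_sub]
    _ = H * h ^ (1 + α) := by rw [← Finset.sum_mul, hpart x hx, one_mul]
end

section
/- Let K ⊆ ℝ^d, let z_1,…,z_L ∈ ℝ^d, h > 0, and let continuous functions φ_1,…,φ_L : ℝ^d → ℝ satisfy: φ_i(x) ≥ 0 for all x ∈ K and all i; ∑_{i=1}^L φ_i(x) = 1 for all x ∈ K; ∑_{i=1}^L φ_i(x) z_i = x for all x ∈ K; and φ_i(x) = 0 whenever ‖x − z_i‖ > h. Let α ∈ (0,1], H ≥ 0, and let u : ℝ^d → ℝ be continuous, differentiable everywhere with ‖∇u(a) − ∇u(b)‖ ≤ H ‖a − b‖^α for all a, b ∈ ℝ^d. Then for every finite Borel measure ρ on ℝ^d concentrated on K (i.e. ρ(Kᶜ) = 0), |∫ u dρ − ∑_{i=1}^L u(z_i) ∫ φ_i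 dρ| ≤ H h^{1+α} ρ(ℝ^d). -/
open MeasureTheory

/-- Operator-norm error bound for the discretization of a measure via the
adjoint of nodal interpolation: `|⟨ρ - I_h^* ρ, u⟩| ≤ H h^{1+α} ρ(ℝ^d)`
for `C^{1,α}` test functions `u`. -/
theorem discretized_measure_duality_error
    {d L : ℕ} (K : Set (EuclideanSpace ℝ (Fin d)))
    (z : Fin L → EuclideanSpace ℝ (Fin d)) (h : ℝ) (hh : 0 < h)
    (φ : Fin L → EuclideanSpace ℝ (Fin d) → ℝ)
    (hφc : ∀ i, Continuous (φ i))
    (hnn : ∀ i, ∀ x ∈ K, 0 ≤ φ i x)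
    (hpart : ∀ x ∈ K, ∑ i, φ i x = 1)
    (haff : ∀ x ∈ K, ∑ i, φ i x • z i = x)
    (hsupp : ∀ i, ∀ x : EuclideanSpace ℝ (Fin d), h < ‖x - z i‖ → φ i x = 0)
    (α : ℝ) (hα0 : 0 < α) (hα1 : α ≤ 1) (H : ℝ) (hH : 0 ≤ H)
    (u : EuclideanSpace ℝ (Fin d) → ℝ) (huc : Continuous u)
    (hu : Differentiable ℝ u)
    (hgrad : ∀ a b : EuclideanSpace ℝ (Fin d),
      ‖gradient u a - gradient u b‖ ≤ H * ‖a - b‖ ^ α)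
    (ρ : Measure (EuclideanSpace ℝ (Fin d))) [IsFiniteMeasure ρ]
    (hρK : ρ Kᶜ = 0) :
    |∫ a, u a ∂ρ - ∑ i, u (z i) * ∫ a, φ i a ∂ρ|
      ≤ H * h ^ (1 + α) * (ρ Set.univ).toReal := by
  -- norms of differences of fderivs equal norms of gradient differences
  have hgg : ∀ y w : EuclideanSpace ℝ (Fin d), ‖fderiv ℝ u y - fderiv ℝ u w‖ = ‖gradient u y - gradient u w‖ := by
    intro y w
    have h1 : gradient u y = (InnerProductSpace.toDual ℝ _).symm (fderiv ℝ u y) := rfl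
    have h2 : gradient u w = (InnerProductSpace.toDual ℝ _).symm (fderiv ℝ u w) := rfl
    rw [h1, h2, ← LinearIsometryEquiv.map_sub, LinearIsometryEquiv.norm_map]
  -- key pointwise estimate
  have key : ∀ x ∈ K, |u x - ∑ i, u (z i) * φ i x| ≤ H * h ^ (1 + α) := by
    intro x hx
    set D := fderiv ℝ u x with hD
    -- Taylor estimate
    have taylor : ∀ i, |u (z i) - u x - D (z i - x)| ≤ H * ‖z i - x‖ ^ α * ‖z i - x‖ := by
      intro i
      have hconv : Convex ℝ (Metric.closedBall x ‖z i - x‖) := convex_closedBall _ _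
      have := hconv.norm_image_sub_le_of_norm_fderiv_le'
        (f := u) (φ := D) (C := H * ‖z i - x‖ ^ α) (x := x) (y := z i)
        (fun y _ => hu y)
        (fun y hy => by
          rw [hgg y x]
          have hy' : ‖y - x‖ ≤ ‖z i - x‖ := by
            simpa [dist_eq_norm] using hy
          calc ‖gradient u y - gradient u x‖ ≤ H * ‖y - x‖ ^ α := hgrad y x
            _ ≤ H * ‖z i - x‖ ^ α :=
              mul_le_mul_of_nonneg_left
                (Real.rpow_le_rpow (norm_nonneg _) hy' hα0.le) hH)
        (Metric.mem_closedBall_self (norm_nonneg _))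
        (by simp [Metric.mem_closedBall, dist_eq_norm])

      simpa [Real.norm_eq_abs] using this
    -- sum of the weighted nodes minus x vanishes
    have hzero : ∑ i, φ i x • (z i - x) = (0 : EuclideanSpace ℝ (Fin d)) := by
      have : ∑ i, φ i x • (z i - x)
          = (∑ i, φ i x • z i) - (∑ i, φ i x) • x := by
        rw [Finset.sum_smul]
        rw [← Finset.sum_sub_distrib]
        congr 1
        ext i
        rw [smul_sub]
      rw [this, haff x hx, hpart x hx, one_smul, sub_self]
    have hDzero : ∑ i, φ i x * D (z i - x) = 0 := by
      have h0 : D (∑ i, φ i x • (z i - x)) = 0 := by rw [hzero, map_zero]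
      rw [map_sum] at h0
      simpa [smul_eq_mul] using h0
    -- rewrite the error as a weighted sum of Taylor remainders
    have hsum : u x - ∑ i, u (z i) * φ i x
        = -∑ i, φ i x * (u (z i) - u x - D (z i - x)) := by
      have h2 : ∑ i, φ i x * (u (z i) - u x - D (z i - x))
          = (∑ i, φ i x * u (z i)) - u x := by
        simp only [mul_sub]
        rw [Finset.sum_sub_distrib, Finset.sum_sub_distrib, ← Finset.sum_mul,
          hpart x hx, one_mul, hDzero, sub_zero]
      rw [h2, neg_sub]
      simp [mul_comm]
    rw [hsum, abs_neg]
    calc |∑ i, φ i x * (u (z i) - u x - D (z i - x))|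
        ≤ ∑ i, |φ i x * (u (z i) - u x - D (z i - x))| := Finset.abs_sum_le_sum_abs _ _
      _ ≤ ∑ i, φ i x * (H * h ^ (1 + α)) := by
          apply Finset.sum_le_sum
          intro i _
          rw [abs_mul, abs_of_nonneg (hnn i x hx)]
          by_cases hzi : φ i x = 0
          · simp [hzi]
          · have hle : ‖z i - x‖ ≤ h := by
              by_contra hcon
              push_neg at hcon
              exact hzi (hsupp i x (by rwa [norm_sub_rev]))
            apply mul_le_mul_of_nonneg_left _ (hnn i x hx)
            calc |u (z i) - u x - D (z i - x)|
                ≤ H * ‖z i - x‖ ^ α * ‖z i - x‖ := taylor i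
              _ ≤ H * h ^ α * h :=
                  mul_le_mul
                    (mul_le_mul_of_nonneg_left
                      (Real.rpow_le_rpow (norm_nonneg _) hle hα0.le) hH)
                    hle (norm_nonneg _) (by positivity)
              _ = H * h ^ (1 + α) := by
                  rw [Real.rpow_add hh, Real.rpow_one]; ring
      _ = (∑ i, φ i x) * (H * h ^ (1 + α)) := by rw [Finset.sum_mul]
      _ = H * h ^ (1 + α) := by rw [hpart x hx, one_mul]
  -- almost everywhere membership in K
  have haeK : ∀ᵐ x ∂ρ, x ∈ K := by
    rw [MeasureTheory.ae_iff]
    exact hρK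
  -- K is contained in a compact set on which u is bounded
  have hKS : K ⊆ ⋃ i, Metric.closedBall (z i) h := by
    intro x hx
    have hone : ∑ i, φ i x = 1 := hpart x hx
    have : ∃ i, φ i x ≠ 0 := by
      by_contra hcon
      push_neg at hcon
      simp [hcon] at hone
    obtain ⟨i, hi⟩ := this
    have : ‖x - z i‖ ≤ h := by
      by_contra hcon
      push_neg at hcon
      exact hi (hsupp i x hcon)
    exact Set.mem_iUnion.2 ⟨i, by simpa [Metric.mem_closedBall, dist_eq_norm] using this⟩
  have hScompact : IsCompact (⋃ i, Metric.closedBall (z i) h) :=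
    isCompact_iUnion fun i => isCompact_closedBall _ _
  obtain ⟨C, hC⟩ := hScompact.exists_bound_of_continuousOn huc.continuousOn
  -- integrability
  have hui : Integrable u ρ := by
    refine Integrable.mono' (integrable_const C) huc.aestronglyMeasurable ?_
    filter_upwards [haeK] with x hx
    exact hC x (hKS hx)
  have hφint : ∀ i, Integrable (φ i) ρ := by
    intro i
    refine (hφc i).integrable_of_hasCompactSupport ?_
    apply HasCompactSupport.intro (isCompact_closedBall (z i) h)
    intro x hxnot
    apply hsupp i x
    simpa [Metric.mem_closedBall, dist_eq_norm, not_le] using hxnot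
  have hfi : Integrable (fun x => ∑ i, u (z i) * φ i x) ρ := by
    apply integrable_finset_sum
    intro i _
    exact (hφint i).const_mul _
  have hint : ∫ a, u a ∂ρ - ∑ i, u (z i) * ∫ a, φ i a ∂ρ
      = ∫ a, (u a - ∑ i, u (z i) * φ i a) ∂ρ := by
    rw [integral_sub hui hfi, integral_finset_sum _ (fun i _ => (hφint i).const_mul _)]
    congr 1
    refine Finset.sum_congr rfl fun i _ => ?_
    rw [MeasureTheory.integral_const_mul]
  rw [hint, ← Real.norm_eq_abs]
  apply norm_integral_le_of_norm_le_const
  filter_upwards [haeK] with x hx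
  simpa [Real.norm_eq_abs] using key x hx
end

section
/- (Accurate reduction to the active set, Proposition 4.2.) Let c : Fin M → Fin N → ℝ, μ : Fin M → ℝ, ν : Fin N → ℝ. Suppose (φ, ψ) is dual feasible (φ i + ψ j ≤ c i j for all i,j) and attains the optimal value of the full problem: ∑_i φ i * μ i + ∑_j ψ j * ν j = min over feasible π of ∑_i ∑_j c i j * π i j (and at least one feasible π exists). Let ε ≥ 0, let φ̃, ψ̃ satisfy (max_i |φ̃ i − φ i|) + (max_j |ψ̃ j − ψ j|) ≤ ε, let c_as ≥ 1, and define the active set A = {(i,j) : φ̃ i + ψ̃ j ≥ c i j − 2 c_as ε}. Then π is an optimal solution of the full problem if and only if π is feasible, π i j = 0 for all (i,j) ∉ A, and π minimizes ∑_i ∑_j c i j * π i j among all feasible plans vanishing outside A; i.e. the solution sets of the full problem and of the problem reduced to A coincide. -/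
/-- Accurate reduction to the active set (Proposition 4.2): the solution sets
of the full discrete transport problem and of the problem reduced to the
active set coincide. -/
theorem active_set_accurate_reduction
    {M N : ℕ} (c : Fin M → Fin N → ℝ) (μ : Fin M → ℝ) (ν : Fin N → ℝ)
    (Feas : (Fin M → Fin N → ℝ) → Prop)
    (hFeas : ∀ π, Feas π ↔
      (∀ i j, 0 ≤ π i j) ∧ (∀ i, ∑ j, π i j = μ i) ∧ (∀ j, ∑ i, π i j = ν j))
    (φ : Fin M → ℝ) (ψ : Fin N → ℝ)
    (hdual : ∀ i j, φ i + ψ j ≤ c i j)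
    (hopt : IsLeast {v : ℝ | ∃ π, Feas π ∧ ∑ i, ∑ j, c i j * π i j = v}
      (∑ i, φ i * μ i + ∑ j, ψ j * ν j))
    (ε : ℝ) (hε : 0 ≤ ε)
    (φt : Fin M → ℝ) (ψt : Fin N → ℝ)
    (happrox : (⨆ i, |φt i - φ i|) + (⨆ j, |ψt j - ψ j|) ≤ ε)
    (cas : ℝ) (hcas : 1 ≤ cas)
    (A : Set (Fin M × Fin N))
    (hA : A = {p : Fin M × Fin N | φt p.1 + ψt p.2 ≥ c p.1 p.2 - 2 * cas * ε}) :
    ∀ π : Fin M → Fin N → ℝ,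
      (Feas π ∧ ∀ π', Feas π' →
          ∑ i, ∑ j, c i j * π i j ≤ ∑ i, ∑ j, c i j * π' i j)
      ↔ (Feas π ∧ (∀ i j, (i, j) ∉ A → π i j = 0) ∧
          ∀ π', Feas π' → (∀ i j, (i, j) ∉ A → π' i j = 0) →
            ∑ i, ∑ j, c i j * π i j ≤ ∑ i, ∑ j, c i j * π' i j) := by

  obtain ⟨⟨π₀, hπ₀feas, hπ₀cost⟩, hlb⟩ := hopt
  set D := ∑ i, φ i * μ i + ∑ j, ψ j * ν j with hD
  -- slack identity
  have slack : ∀ π', Feas π' → ∑ i, ∑ j, (c i j - φ i - ψ j) * π' i j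
      = (∑ i, ∑ j, c i j * π' i j) - D := by
    intro π' hπ'
    obtain ⟨hpos, hrow, hcol⟩ := (hFeas π').mp hπ'
    have h1 : ∑ i, ∑ j, φ i * π' i j = ∑ i, φ i * μ i := by
      refine Finset.sum_congr rfl fun i _ => ?_
      rw [← Finset.mul_sum, hrow]
    have h2 : ∑ i, ∑ j, ψ j * π' i j = ∑ j, ψ j * ν j := by
      rw [Finset.sum_comm]
      exact Finset.sum_congr rfl fun j _ => by rw [← Finset.mul_sum, hcol]
    simp only [sub_mul, Finset.sum_sub_distrib]
    rw [h1, h2, hD]; ring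
  -- lower bound for feasible plans
  have hlow : ∀ π', Feas π' → D ≤ ∑ i, ∑ j, c i j * π' i j := by
    intro π' hπ'
    exact hlb ⟨π', hπ', rfl⟩
  -- support of any exactly optimal plan lies in A
  have hsupp : ∀ π', Feas π' → (∑ i, ∑ j, c i j * π' i j = D) →
      ∀ i j, (i, j) ∉ A → π' i j = 0 := by
    intro π' hπ' hcost i j hij
    obtain ⟨hpos, hrow, hcol⟩ := (hFeas π').mp hπ'
    have hzero : ∑ i, ∑ j, (c i j - φ i - ψ j) * π' i j = 0 := by
      rw [slack π' hπ', hcost, sub_self]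
    have hterm : ∀ i j, 0 ≤ (c i j - φ i - ψ j) * π' i j := fun i j =>
      mul_nonneg (by linarith [hdual i j]) (hpos i j)
    have hz : (c i j - φ i - ψ j) * π' i j = 0 := by
      have h1 := (Finset.sum_eq_zero_iff_of_nonneg
        (fun i _ => Finset.sum_nonneg fun j _ => hterm i j)).mp hzero i (Finset.mem_univ i)
      exact (Finset.sum_eq_zero_iff_of_nonneg
        (fun j _ => hterm i j)).mp h1 j (Finset.mem_univ j)
    by_contra hne
    have hccase : c i j - φ i - ψ j = 0 := by
      rcases mul_eq_zero.mp hz with h | h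
      · exact h
      · exact absurd h hne
    -- derive (i,j) ∈ A
    apply hij
    rw [hA]
    have hbφ : |φt i - φ i| ≤ ⨆ i, |φt i - φ i| :=
      le_ciSup (f := fun i => |φt i - φ i|) (Set.Finite.bddAbove (Set.finite_range _)) i
    have hbψ : |ψt j - ψ j| ≤ ⨆ j, |ψt j - ψ j| :=
      le_ciSup (f := fun j => |ψt j - ψ j|) (Set.Finite.bddAbove (Set.finite_range _)) j
    have h1 : φ i - φt i ≤ |φt i - φ i| := by
      rw [abs_sub_comm]; exact le_abs_self _
    have h2 : ψ j - ψt j ≤ |ψt j - ψ j| := by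
      rw [abs_sub_comm]; exact le_abs_self _
    have hsum : (φ i - φt i) + (ψ j - ψt j) ≤ ε := by
      calc (φ i - φt i) + (ψ j - ψt j) ≤ |φt i - φ i| + |ψt j - ψ j| := by linarith
        _ ≤ (⨆ i, |φt i - φ i|) + (⨆ j, |ψt j - ψ j|) := by linarith
        _ ≤ ε := happrox
    show φt i + ψt j ≥ c i j - 2 * cas * ε
    nlinarith
  intro π
  constructor
  · rintro ⟨hfeas, hmin⟩
    have hcost : ∑ i, ∑ j, c i j * π i j = D :=
      le_antisymm (hπ₀cost ▸ hmin π₀ hπ₀feas) (hlow π hfeas)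
    exact ⟨hfeas, hsupp π hfeas hcost, fun π' hπ' _ => hmin π' hπ'⟩
  · rintro ⟨hfeas, hvan, hminA⟩
    refine ⟨hfeas, fun π' hπ' => ?_⟩
    have h0 := hminA π₀ hπ₀feas (hsupp π₀ hπ₀feas hπ₀cost)
    calc ∑ i, ∑ j, c i j * π i j ≤ ∑ i, ∑ j, c i j * π₀ i j := h0
      _ = D := hπ₀cost
      _ ≤ ∑ i, ∑ j, c i j * π' i j := hlow π' hπ'
end

section
/- Let 1 < p ≤ 2. There exists a constant C > 0 such that for all a, b in ℝ^d (with the Euclidean norm), ‖F(a) − F(b)‖ ≤ C ‖a − b‖^{p−1}, where F(v) = ‖v‖^{p−2} v for v ≠ 0 and F(0) = 0. -/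
open Real

private lemma holder_scalar_key (p : ℝ) (hp1 : 1 < p) (hp2 : p ≤ 2) {s r : ℝ}
    (hs : 0 < s) (hsr : s ≤ r) :
    (s ^ (p-2) - r ^ (p-2)) * s ≤ (2 - p) * (r - s) * s ^ (p-2) := by
  set q : ℝ := 2 - p with hq
  have hq0 : 0 ≤ q := by simp [hq]; linarith
  have hq1 : q ≤ 1 := by simp [hq]; linarith
  have hr : 0 < r := hs.trans_le hsr
  set h : ℝ := r - s with hh
  have hh0 : 0 ≤ h := by simp [hh]; linarith
  set A : ℝ := s ^ q with hA
  set B : ℝ := r ^ q with hB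
  have hApos : 0 < A := rpow_pos_of_pos hs _
  have hBpos : 0 < B := rpow_pos_of_pos hr _
  have hAB : A ≤ B := rpow_le_rpow hs.le hsr hq0
  have hbern : B * s ≤ A * s + q * h * A := by
    have h1 : (-1:ℝ) ≤ h / s := by
      have : (0:ℝ) ≤ h / s := by positivity
      linarith
    have h2 : (1 + h/s) ^ q ≤ 1 + q * (h/s) :=
      rpow_one_add_le_one_add_mul_self h1 hq0 hq1
    have h3 : B = A * (1 + h/s) ^ q := by
      rw [hA, hB, ← mul_rpow hs.le (by positivity)]
      congr 1
      field_simp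
      rw [hh]; ring
    calc B * s = A * (1 + h/s)^q * s := by rw [h3]
      _ ≤ A * (1 + q * (h/s)) * s := by
          have := mul_le_mul_of_nonneg_left h2 hApos.le
          nlinarith
      _ = A * s + q * h * A := by field_simp
  have e1 : s ^ (p-2) = A⁻¹ := by
    rw [hA, ← rpow_neg hs.le]; norm_num [hq]
  have e2 : r ^ (p-2) = B⁻¹ := by
    rw [hB, ← rpow_neg hr.le]; norm_num [hq]
  rw [e1, e2]
  have e3 : A⁻¹ - B⁻¹ = (B - A)/(A*B) := by field_simp
  rw [e3, div_mul_eq_mul_div, div_le_iff₀ (by positivity)]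
  have e4 : (2 - p) * (r - s) * A⁻¹ * (A * B) = q * h * B := by
    rw [← hq, ← hh]; field_simp
  rw [e4]
  nlinarith [mul_le_mul_of_nonneg_left hAB (mul_nonneg hq0 hh0)]

private lemma holder_rpow_mul_self (p : ℝ) (hp1 : 1 < p) {x : ℝ} (hx : 0 ≤ x) :
    x ^ (p-2) * x = x ^ (p-1) := by
  rcases hx.eq_or_lt with h | h
  · rw [← h, mul_zero, zero_rpow (by intro h0; rw [sub_eq_zero] at h0; linarith : p - 1 ≠ 0)]
  · nth_rewrite 2 [show x = x ^ (1:ℝ) by rw [rpow_one]]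
    rw [← rpow_add h]
    congr 1; ring

private lemma holder_aux {E : Type*} [NormedAddCommGroup E] [NormedSpace ℝ E]
    (p : ℝ) (hp1 : 1 < p) (hp2 : p ≤ 2) (a b : E) (hba : ‖b‖ ≤ ‖a‖) :
    ‖(‖a‖ ^ (p - 2)) • a - (‖b‖ ^ (p - 2)) • b‖ ≤ 5 * ‖a - b‖ ^ (p - 1) := by
  by_cases hab : a = b
  · subst hab
    have hne : p - 1 ≠ 0 := by intro h0; rw [sub_eq_zero] at h0; linarith
    simp only [sub_self, norm_zero, zero_rpow hne, mul_zero, le_refl]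
  set t : ℝ := ‖a - b‖ with ht
  set s : ℝ := ‖b‖ with hsd
  set r : ℝ := ‖a‖ with hrd
  have ht0 : 0 ≤ t := norm_nonneg _
  have hs0 : 0 ≤ s := norm_nonneg _
  have hrs : r - s ≤ t := by
    have := norm_sub_norm_le a b
    rw [← ht, ← hsd, ← hrd] at this; linarith
  have hα0 : 0 < p - 1 := by linarith
  have hα1 : p - 1 ≤ 1 := by linarith
  have htp0 : 0 ≤ t ^ (p-1) := rpow_nonneg ht0 _
  rcases le_or_gt s (2*t) with hcase | hcase
  · -- small norms case
    have hr3 : r ≤ 3 * t := by linarith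
    have hna : ‖(‖a‖ ^ (p - 2)) • a‖ = r ^ (p-1) := by
      rw [norm_smul, Real.norm_eq_abs, abs_of_nonneg (rpow_nonneg (norm_nonneg a) _), ← hrd,
        holder_rpow_mul_self p hp1 (norm_nonneg a)]
    have hnb : ‖(‖b‖ ^ (p - 2)) • b‖ = s ^ (p-1) := by
      rw [norm_smul, Real.norm_eq_abs, abs_of_nonneg (rpow_nonneg (norm_nonneg b) _), ← hsd,
        holder_rpow_mul_self p hp1 (norm_nonneg b)]
    have h1 : r ^ (p-1) ≤ 3 * t ^ (p-1) := by
      calc r ^ (p-1) ≤ (3*t) ^ (p-1) := rpow_le_rpow (hs0.trans hba) hr3 hα0.le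
        _ = 3 ^ (p-1) * t ^ (p-1) := mul_rpow (by norm_num) ht0
        _ ≤ 3 * t ^ (p-1) := by
            have : (3:ℝ) ^ (p-1) ≤ 3 ^ (1:ℝ) :=
              rpow_le_rpow_of_exponent_le (by norm_num) hα1
            rw [rpow_one] at this
            exact mul_le_mul_of_nonneg_right this htp0
    have h2 : s ^ (p-1) ≤ 2 * t ^ (p-1) := by
      calc s ^ (p-1) ≤ (2*t) ^ (p-1) := rpow_le_rpow hs0 hcase hα0.le
        _ = 2 ^ (p-1) * t ^ (p-1) := mul_rpow (by norm_num) ht0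
        _ ≤ 2 * t ^ (p-1) := by
            have : (2:ℝ) ^ (p-1) ≤ 2 ^ (1:ℝ) :=
              rpow_le_rpow_of_exponent_le (by norm_num) hα1
            rw [rpow_one] at this
            exact mul_le_mul_of_nonneg_right this htp0
    calc ‖(‖a‖ ^ (p - 2)) • a - (‖b‖ ^ (p - 2)) • b‖
        ≤ ‖(‖a‖ ^ (p - 2)) • a‖ + ‖(‖b‖ ^ (p - 2)) • b‖ := norm_sub_le _ _
      _ = r ^ (p-1) + s ^ (p-1) := by rw [hna, hnb]
      _ ≤ 5 * t ^ (p-1) := by linarith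
  · -- large norms case : 2t < s ≤ r
    have hspos : 0 < s := lt_of_le_of_lt (by linarith) hcase
    have htpos : 0 < t := by
      rw [ht]
      exact norm_pos_iff.mpr (sub_ne_zero.mpr hab)
    have hrpos : 0 < r := hspos.trans_le hba
    have hdecomp : (‖a‖ ^ (p - 2)) • a - (‖b‖ ^ (p - 2)) • b
        = (r ^ (p-2)) • (a - b) + (r ^ (p-2) - s ^ (p-2)) • b := by
      rw [← hrd, ← hsd]
      module
    have hmono : r ^ (p-2) ≤ s ^ (p-2) :=
      rpow_le_rpow_of_nonpos hspos hba (by linarith)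
    have hs2t : (2*t) ^ (p-2) ≤ t ^ (p-2) := by
      rw [mul_rpow (by norm_num) ht0]
      have h2 : (2:ℝ) ^ (p-2) ≤ 1 := by
        rw [show (1:ℝ) = 2 ^ (0:ℝ) by norm_num]
        exact rpow_le_rpow_of_exponent_le (by norm_num) (by linarith)
      nlinarith [rpow_nonneg ht0 (p-2)]
    have hs_le : s ^ (p-2) ≤ t ^ (p-2) := le_trans
      (rpow_le_rpow_of_nonpos (by linarith) hcase.le (by linarith)) hs2t
    have hr_le : r ^ (p-2) ≤ t ^ (p-2) := le_trans hmono hs_le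
    have htt : t ^ (p-2) * t = t ^ (p-1) := holder_rpow_mul_self p hp1 ht0
    have term1 : ‖(r ^ (p-2)) • (a - b)‖ ≤ t ^ (p-1) := by
      rw [norm_smul, Real.norm_eq_abs, abs_of_nonneg (rpow_nonneg hrpos.le _), ← ht]
      calc r ^ (p-2) * t ≤ t ^ (p-2) * t := mul_le_mul_of_nonneg_right hr_le ht0
        _ = t ^ (p-1) := htt
    have term2 : ‖(r ^ (p-2) - s ^ (p-2)) • b‖ ≤ t ^ (p-1) := by
      rw [norm_smul, Real.norm_eq_abs, ← hsd, abs_of_nonpos (by linarith), neg_sub]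
      have key := holder_scalar_key p hp1 hp2 hspos hba
      have h2p : 2 - p ≤ 1 := by linarith
      have hrs0 : 0 ≤ r - s := by linarith
      have hb1 : (2 - p) * (r - s) * s ^ (p-2) ≤ t * t ^ (p-2) := by
        have hsnn : 0 ≤ s ^ (p-2) := rpow_nonneg hspos.le _
        have htnn : 0 ≤ t ^ (p-2) := rpow_nonneg ht0 _
        have c1 : (2-p)*(r-s) ≤ t := by nlinarith
        exact mul_le_mul c1 hs_le hsnn ht0
      calc (s ^ (p-2) - r ^ (p-2)) * s ≤ (2-p) * (r-s) * s ^ (p-2) := key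
        _ ≤ t * t ^ (p-2) := hb1
        _ = t ^ (p-1) := by rw [mul_comm]; exact htt
    calc ‖(‖a‖ ^ (p - 2)) • a - (‖b‖ ^ (p - 2)) • b‖
        = ‖(r ^ (p-2)) • (a - b) + (r ^ (p-2) - s ^ (p-2)) • b‖ := by rw [hdecomp]
      _ ≤ ‖(r ^ (p-2)) • (a - b)‖ + ‖(r ^ (p-2) - s ^ (p-2)) • b‖ := norm_add_le _ _
      _ ≤ 5 * t ^ (p-1) := by linarith

/-- Hölder continuity of exponent `p - 1` of the gradient `v ↦ ‖v‖^{p-2} v`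
of the polynomial cost for subquadratic exponents `1 < p ≤ 2`. -/
theorem holder_gradient_subquadratic
    (d : ℕ) (p : ℝ) (hp1 : 1 < p) (hp2 : p ≤ 2) :
    ∃ C > 0, ∀ a b : EuclideanSpace ℝ (Fin d),
      ‖(‖a‖ ^ (p - 2)) • a - (‖b‖ ^ (p - 2)) • b‖ ≤ C * ‖a - b‖ ^ (p - 1) := by
  refine ⟨5, by norm_num, fun a b => ?_⟩
  rcases le_total ‖b‖ ‖a‖ with h | h
  · exact holder_aux p hp1 hp2 a b h
  · have := holder_aux p hp1 hp2 b a h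
    rwa [norm_sub_rev, norm_sub_rev b a] at this
end
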